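/- Let f : ℝ^p → ℝ be μ-strongly convex and L-smooth with 0 < μ ≤ L, let x⋆ be its (unique) minimizer, and let 0 < α ≤ 1/L. Then for every x ∈ ℝ^p, ‖x − α∇f(x) − x⋆‖ ≤ (1 − μα)‖x − x⋆‖. -/

import Mathlib

/-!
Subtracting `μ/2 ‖·‖²` from `f` leaves a convex function `h` whose gradient
`G = ∇f - μ • id` obeys the quadratic upper bound with constant `L - μ` (descent lemma).
Convexity plus that upper bound make `G` co-coercive:
`‖G x - G y‖² ≤ (L - μ) ⟪G x - G y, x - y⟫`. As `∇f x⋆ = 0`, the step is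
`x - α ∇f x - x⋆ = (1 - μα)(x - x⋆) - α (G x - G x⋆)`; expanding its squared norm,
co-coercivity and `α (L + μ) ≤ 2` let the cross term absorb the quadratic one.
-/

open RealInnerProductSpace

section
variable {E : Type*} [NormedAddCommGroup E] [InnerProductSpace ℝ E]

def bregman (h : E → ℝ) (G : E → E) (x y : E) : ℝ :=
  h y - h x - ⟪G x, y - x⟫

lemma bregman_add_bregman (h : E → ℝ) (G : E → E) (x y : E) :
    bregman h G x y + bregman h G y x = ⟪G y - G x, y - x⟫ := by
  simp only [bregman, inner_sub_left, inner_sub_right]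
  ring

lemma bregman_three_point (h : E → ℝ) (G : E → E) (x y z : E) :
    bregman h G x y = bregman h G x z - bregman h G y z + ⟪G y - G x, y - z⟫ := by
  simp only [bregman, inner_sub_left, inner_sub_right]
  ring

lemma bregman_sub_half_mul_norm_sq (h : E → ℝ) (G : E → E) (ρ : ℝ) (x y : E) :
    bregman (fun z => h z - ρ / 2 * ‖z‖ ^ 2) (fun z => G z - ρ • z) x y =
      bregman h G x y - ρ / 2 * ‖y - x‖ ^ 2 := by
  simp only [bregman, inner_sub_left, real_inner_smul_left, norm_sub_sq_real, inner_sub_right,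
    real_inner_self_eq_norm_sq, real_inner_comm x y]
  ring

lemma le_mul_of_forall_two_mul_sub_mul_sq_mul_le {K c s : ℝ} (hK : 0 ≤ K)
    (h : ∀ t : ℝ, (2 * t - K * t ^ 2) * c ≤ s) : c ≤ K * s := by
  rcases hK.eq_or_lt with rfl | hK
  · by_contra! hc
    rw [zero_mul] at hc
    have key : (2 * ((s + 1) / (2 * c)) - 0 * ((s + 1) / (2 * c)) ^ 2) * c = s + 1 := by
      field_simp [hc.ne']; ring
    linarith [h ((s + 1) / (2 * c))]
  · have := h K⁻¹
    field_simp at this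
    linarith

variable {h : E → ℝ} {G : E → E}

lemma inner_sub_sub_nonneg_of_bregman_nonneg (h0 : ∀ x y, 0 ≤ bregman h G x y) (a b : E) :
    0 ≤ ⟪G b - G a, b - a⟫ := by
  rw [← bregman_add_bregman]
  exact add_nonneg (h0 a b) (h0 b a)

lemma norm_sub_sq_le_mul_inner_of_bregman_le {K : ℝ} (hK : 0 ≤ K)
    (h0 : ∀ x y, 0 ≤ bregman h G x y) (hle : ∀ x y, bregman h G x y ≤ K / 2 * ‖y - x‖ ^ 2)
    (a b : E) : ‖G b - G a‖ ^ 2 ≤ K * ⟪G b - G a, b - a⟫ := by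
  have one_sided : ∀ (x y : E) (t : ℝ),
      (t - K / 2 * t ^ 2) * ‖G y - G x‖ ^ 2 ≤ bregman h G x y := by
    intro x y t
    -- test both bounds at the point `y - t • (G y - G x)`
    have hz := bregman_three_point h G x y (y - t • (G y - G x))
    simp only [sub_sub_cancel, inner_smul_right, real_inner_self_eq_norm_sq] at hz
    have hxz := h0 x (y - t • (G y - G x))
    have hyz := hle y (y - t • (G y - G x))
    rw [sub_sub_cancel_left, norm_neg, norm_smul, mul_pow, Real.norm_eq_abs, sq_abs] at hyz
    nlinarith
  refine le_mul_of_forall_two_mul_sub_mul_sq_mul_le hK fun t => ?_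
  have hab := one_sided a b t
  have hba := one_sided b a t
  rw [← norm_neg, neg_sub] at hba
  linarith [bregman_add_bregman h G a b]

lemma norm_smul_sub_smul_le {u d : E} {K α c : ℝ} (hco : ‖u‖ ^ 2 ≤ K * ⟪u, d⟫)
    (hmono : 0 ≤ ⟪u, d⟫) (hα : 0 ≤ α) (hc : 0 ≤ c) (hαK : α * K ≤ 2 * c) :
    ‖c • d - α • u‖ ≤ c * ‖d‖ := by
  refine le_of_sq_le_sq ?_ (by positivity)
  have : α * (α * K - 2 * c) * ⟪u, d⟫ ≤ 0 :=
    mul_nonpos_of_nonpos_of_nonneg (mul_nonpos_of_nonneg_of_nonpos hα (by linarith)) hmono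
  calc ‖c • d - α • u‖ ^ 2 = c ^ 2 * ‖d‖ ^ 2 - 2 * c * α * ⟪u, d⟫ + α ^ 2 * ‖u‖ ^ 2 := by
        rw [norm_sub_sq_real, norm_smul, norm_smul, inner_smul_left, inner_smul_right,
          real_inner_comm, Real.norm_eq_abs, Real.norm_eq_abs, mul_pow, mul_pow, sq_abs, sq_abs]
        simp only [conj_trivial]
        ring
    _ ≤ (c * ‖d‖) ^ 2 := by nlinarith [mul_le_mul_of_nonneg_left hco (sq_nonneg α)]

end

section
variable {E : Type*} [NormedAddCommGroup E] [InnerProductSpace ℝ E] [CompleteSpace E]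

lemma bregman_gradient_le_of_lipschitz {f : E → ℝ} {L : ℝ} (hf : Differentiable ℝ f)
    (hL : ∀ x y, ‖gradient f x - gradient f y‖ ≤ L * ‖x - y‖) (x y : E) :
    bregman f (gradient f) x y ≤ L / 2 * ‖y - x‖ ^ 2 := by
  obtain ⟨d, rfl⟩ : ∃ d, y = x + d := ⟨y - x, by abel⟩
  let φ : ℝ → ℝ := fun t => f (x + t • d) - t * ⟪gradient f x, d⟫ - L / 2 * t ^ 2 * ‖d‖ ^ 2
  have hφ : ∀ t, HasDerivAt φ
      (⟪gradient f (x + t • d), d⟫ - ⟪gradient f x, d⟫ - L * t * ‖d‖ ^ 2) t := by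
    intro t
    have hline : HasDerivAt (fun t : ℝ => x + t • d) d t := by
      simpa using ((hasDerivAt_id t).smul_const d).const_add x
    have hcomp := (hf (x + t • d)).hasGradientAt.hasFDerivAt.comp_hasDerivAt t hline
    simp only [InnerProductSpace.toDual_apply_apply] at hcomp
    refine ((hcomp.sub ((hasDerivAt_id t).mul_const ⟪gradient f x, d⟫)).sub
      (((hasDerivAt_pow 2 t).const_mul (L / 2)).mul_const (‖d‖ ^ 2))).congr_deriv ?_
    push_cast
    ring
  have hanti : AntitoneOn φ (Set.Ici 0) := by
    refine antitoneOn_of_hasDerivWithinAt_nonpos (convex_Ici 0)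
      (fun t _ => (hφ t).continuousAt.continuousWithinAt) (fun t _ => (hφ t).hasDerivWithinAt) ?_
    intro t ht
    rw [interior_Ici, Set.mem_Ioi] at ht
    have := calc ⟪gradient f (x + t • d) - gradient f x, d⟫
        ≤ ‖gradient f (x + t • d) - gradient f x‖ * ‖d‖ := real_inner_le_norm _ _
      _ ≤ L * ‖x + t • d - x‖ * ‖d‖ := by gcongr; exact hL _ _
      _ = L * t * ‖d‖ ^ 2 := by
        rw [add_sub_cancel_left, norm_smul, Real.norm_eq_abs, abs_of_pos ht]; ring
    rw [inner_sub_left] at this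
    linarith
  have := hanti (Set.mem_Ici.2 le_rfl) (Set.mem_Ici.2 zero_le_one) zero_le_one
  simp only [φ, one_smul, zero_smul, add_zero, one_mul, zero_mul, one_pow, mul_one, sub_zero,
    ne_eq, OfNat.ofNat_ne_zero, not_false_eq_true, zero_pow, mul_zero] at this
  rw [bregman, add_sub_cancel_left]
  linarith

end

theorem gradient_descent_contraction {p : ℕ} (μ L α : ℝ)
    (hμL : μ ≤ L)
    (f : EuclideanSpace ℝ (Fin p) → ℝ)
    (hdiff : Differentiable ℝ f)
    (hsmooth : ∀ x y, ‖gradient f x - gradient f y‖ ≤ L * ‖x - y‖)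
    (hsc : ∀ x y, f y ≥ f x + ⟪gradient f x, y - x⟫ + μ / 2 * ‖x - y‖ ^ 2)
    (xstar : EuclideanSpace ℝ (Fin p)) (hmin : ∀ y, f xstar ≤ f y)
    (hα0 : 0 < α) (hα : α ≤ 1 / L)
    (x : EuclideanSpace ℝ (Fin p)) :
    ‖x - α • gradient f x - xstar‖ ≤ (1 - μ * α) * ‖x - xstar‖ := by
  set h := fun z => f z - μ / 2 * ‖z‖ ^ 2
  set G := fun z => gradient f z - μ • z
  have hlow : ∀ x y, 0 ≤ bregman h G x y := fun x y => by
    rw [bregman_sub_half_mul_norm_sq, bregman, ← norm_sub_rev]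
    linarith [hsc x y]
  have hup : ∀ x y, bregman h G x y ≤ (L - μ) / 2 * ‖y - x‖ ^ 2 := fun x y => by
    rw [bregman_sub_half_mul_norm_sq]
    linarith [bregman_gradient_le_of_lipschitz hdiff hsmooth x y]
  have hgrad : gradient f xstar = 0 := by
    simp [gradient, (IsLocalMin.fderiv_eq_zero (Filter.Eventually.of_forall hmin))]
  have hαL : α * L ≤ 1 := by
    rcases le_or_gt L 0 with hL | hL
    · nlinarith
    · rwa [le_div_iff₀ hL] at hα
  have hstep :
      x - α • gradient f x - xstar = (1 - μ * α) • (x - xstar) - α • (G x - G xstar) := by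
    simp only [G, hgrad]
    module
  rw [hstep]
  refine norm_smul_sub_smul_le
    (norm_sub_sq_le_mul_inner_of_bregman_le (by linarith) hlow hup xstar x)
    (inner_sub_sub_nonneg_of_bregman_nonneg hlow xstar x) hα0.le ?_ ?_ <;>
    nlinarith
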